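/- Let z ∈ ℂ∖ℝ, ω ∈ Ω, let (F_n(z,ω))_{n≥0} be the Jost solutions and M^φ(z,ω) the associated Weyl–Titchmarsh function. Then: (a) M^φ(z,ω) is a symmetric matrix, i.e. (M^φ(z,ω))^t = M^φ(z,ω); and (b) D(ω) · Im[M^φ(z,ω)] · D(ω) = Im[z] · ∑_{k=1}^{∞} F_k(z,ω)* F_k(z,ω). -/

import Mathlib

/-!
For Hermitian coefficients, the matrix Wronskian `W_n = G_nᴴ D_n F_{n+1} - G_{n+1}ᴴ D_n F_n` of two
solutions, at spectral parameters `w` and `z`, grows by `(z - w̄) G_{n+1}ᴴ F_{n+1}` at each step;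
for square-summable solutions it tends to `0`, so `W_0 = -(z - w̄) ∑_{k ≥ 1} G_kᴴ F_k`.
Since the coefficients are real, `F̄` solves the equation at `z̄`; the pair `(F̄, F)` gives
`D F_1 = F_1ᵀ D`, i.e. the symmetry of `M = -F_1 D⁻¹`, and the pair `(F, F)` gives
`F_1ᴴ D - D F_1 = 2i Im z ∑_{k ≥ 1} F_kᴴ F_k`, which is `2i D Im[M] D`.
-/

open MeasureTheory Matrix Filter Topology Finset

noncomputable section

/-- Complexification of a real matrix. -/
def cx {l : ℕ} (A : Matrix (Fin l) (Fin l) ℝ) : Matrix (Fin l) (Fin l) ℂ :=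
  A.map (fun a => (a : ℂ))

/-- The imaginary part of a complex square matrix: `Im[A] = (A − Aᴴ)/(2i)`. -/
def matIm {m : Type*} (A : Matrix m m ℂ) : Matrix m m ℂ :=
  (2 * Complex.I)⁻¹ • (A - Aᴴ)

/-- `F` is a matrix solution of the eigenvalue equation
`D_{n-1} F_{n-1} + D_n F_{n+1} + V_n F_n = z F_n` (on `ℤ_+`, for `n ≥ 1`). -/
def IsMatSol {l : ℕ} (Ds Vs : ℕ → Matrix (Fin l) (Fin l) ℂ) (z : ℂ)
    (F : ℕ → Matrix (Fin l) (Fin l) ℂ) : Prop :=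
  ∀ n : ℕ, 1 ≤ n → Ds (n - 1) * F (n - 1) + Ds n * F (n + 1) + Vs n * F n = z • F n

/-- `F` is the Jost solution: a matrix solution of the eigenvalue equation with
`F_0 = I` and `∑_n ‖F_n‖² < ∞`. -/
def IsJost {l : ℕ} (Ds Vs : ℕ → Matrix (Fin l) (Fin l) ℂ) (z : ℂ)
    (F : ℕ → Matrix (Fin l) (Fin l) ℂ) : Prop :=
  IsMatSol Ds Vs z F ∧ F 0 = 1 ∧
    Summable (fun n : ℕ => ∑ i, ∑ j, ‖F n i j‖ ^ 2)

open scoped ComplexConjugate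

lemma Matrix.conjTranspose_map_starRingEnd {m n R : Type*} [CommSemiring R] [StarRing R]
    (A : Matrix m n R) : (A.map (starRingEnd R))ᴴ = Aᵀ := by
  ext; simp [starRingEnd_apply]

lemma Matrix.transpose_mul_nonsing_inv_of_mul_eq {n R : Type*} [Fintype n] [DecidableEq n]
    [CommRing R] {A E : Matrix n n R} (hE : Eᵀ = E) (hdet : IsUnit E.det) (h : E * A = Aᵀ * E) :
    (A * E⁻¹)ᵀ = A * E⁻¹ := by
  have hAt : Aᵀ = E * A * E⁻¹ := by rw [h, Matrix.mul_assoc, mul_nonsing_inv _ hdet, mul_one]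
  rw [transpose_mul, transpose_nonsing_inv, hE, hAt, ← Matrix.mul_assoc, ← Matrix.mul_assoc,
    nonsing_inv_mul _ hdet, one_mul]

lemma mul_matIm_neg_mul_nonsing_inv_mul {n : Type*} [Fintype n] [DecidableEq n]
    {A E : Matrix n n ℂ} (hE : Eᴴ = E) (hdet : IsUnit E.det) :
    E * matIm (-(A * E⁻¹)) * E = (2 * Complex.I)⁻¹ • (Aᴴ * E - E * A) := by
  have h1 : E * (A * E⁻¹) * E = E * A := by
    rw [Matrix.mul_assoc, Matrix.mul_assoc, nonsing_inv_mul _ hdet, mul_one]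
  have h2 : E * (A * E⁻¹)ᴴ * E = Aᴴ * E := by
    rw [conjTranspose_mul, conjTranspose_nonsing_inv, hE, ← Matrix.mul_assoc,
      mul_nonsing_inv _ hdet, one_mul]
  simp only [matIm, conjTranspose_neg, Matrix.mul_smul, Matrix.smul_mul, Matrix.mul_sub,
    Matrix.sub_mul, Matrix.mul_neg, Matrix.neg_mul, h1, h2]
  module

section Complexification

variable {l : ℕ} {A : Matrix (Fin l) (Fin l) ℝ}

lemma norm_cx_apply (i j : Fin l) : ‖cx A i j‖ = |A i j| := by
  simp [cx]

lemma cx_map_conj : (cx A).map conj = cx A := by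
  ext; simp [cx]

lemma cx_transpose (h : A.IsSymm) : (cx A)ᵀ = cx A := by
  ext i j; simp [cx, ← h.apply i j]

lemma cx_conjTranspose (h : A.IsSymm) : (cx A)ᴴ = cx A := by
  ext i j; simp [cx, conjTranspose_apply, ← h.apply i j]

lemma isUnit_det_cx (h : IsUnit A) : IsUnit (cx A).det := by
  rw [isUnit_iff_isUnit_det] at h
  rw [show cx A = Complex.ofRealHom.mapMatrix A from rfl, ← RingHom.map_det]
  exact h.map _

end Complexification

section Frobenius

attribute [local instance] Matrix.frobeniusSeminormedAddCommGroup

variable {ι α : Type*} [Fintype ι]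

lemma Matrix.frobenius_norm_sq {m n : Type*} [Fintype m] [Fintype n] [SeminormedAddCommGroup α]
    (A : Matrix m n α) :
    ‖A‖ ^ 2 = ∑ i, ∑ j, ‖A i j‖ ^ 2 := by
  rw [frobenius_norm_def, ← Real.sqrt_eq_rpow, Real.sq_sqrt (by positivity)]
  simp only [Real.rpow_two]

lemma Matrix.frobenius_norm_le_of_forall_norm_le [SeminormedAddCommGroup α] {A : Matrix ι ι α}
    {C : ℝ} (hC : ∀ i j, ‖A i j‖ ≤ C) : ‖A‖ ≤ Fintype.card ι * C := by
  rcases isEmpty_or_nonempty ι with hι | ⟨⟨i⟩⟩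
  · simp [Subsingleton.elim A 0]
  have hC0 : 0 ≤ C := (norm_nonneg _).trans (hC i i)
  refine le_of_sq_le_sq ?_ (by positivity)
  calc ‖A‖ ^ 2 = ∑ i, ∑ j, ‖A i j‖ ^ 2 := A.frobenius_norm_sq
    _ ≤ ∑ _i : ι, ∑ _j : ι, C ^ 2 := by gcongr with i _ j; exact hC i j
    _ = (Fintype.card ι * C) ^ 2 := by simp; ring

variable {𝕜 : Type*} [RCLike 𝕜] {F G D : ℕ → Matrix ι ι 𝕜}

lemma Matrix.tendsto_zero_of_summable_sum_norm_sq
    (hF : Summable fun n => ∑ i, ∑ j, ‖F n i j‖ ^ 2) : Tendsto F atTop (𝓝 0) := by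
  have hsq : Tendsto (fun n => ‖F n‖ ^ 2) atTop (𝓝 0) := by
    simpa only [frobenius_norm_sq] using hF.tendsto_atTop_zero
  have := (Real.continuous_sqrt.tendsto 0).comp hsq
  simp only [Function.comp_def, Real.sqrt_sq (norm_nonneg _), Real.sqrt_zero] at this
  exact tendsto_zero_iff_norm_tendsto_zero.2 this

lemma Matrix.tendsto_conjTranspose_mul_mul_zero {C : ℝ} (hD : ∀ n i j, ‖D n i j‖ ≤ C)
    (hG : Tendsto G atTop (𝓝 0)) (hF : Tendsto F atTop (𝓝 0)) :
    Tendsto (fun n => (G n)ᴴ * D n * F n) atTop (𝓝 0) := by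
  replace hG := tendsto_zero_iff_norm_tendsto_zero.1 hG
  replace hF := tendsto_zero_iff_norm_tendsto_zero.1 hF
  refine tendsto_zero_iff_norm_tendsto_zero.2 ?_
  have hbound : ∀ n, ‖(G n)ᴴ * D n * F n‖ ≤ ‖G n‖ * (Fintype.card ι * C) * ‖F n‖ := fun n =>
    calc ‖(G n)ᴴ * D n * F n‖ ≤ ‖(G n)ᴴ‖ * ‖D n‖ * ‖F n‖ := by
          grw [frobenius_norm_mul, frobenius_norm_mul]
      _ ≤ ‖G n‖ * (Fintype.card ι * C) * ‖F n‖ := by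
          rw [frobenius_norm_conjTranspose]
          gcongr
          exact frobenius_norm_le_of_forall_norm_le (hD n)
  refine squeeze_zero (fun n => norm_nonneg _) hbound ?_
  simpa using (hG.mul_const _).mul hF

lemma Matrix.summable_conjTranspose_mul
    (hG : Summable fun n => ∑ i, ∑ j, ‖G n i j‖ ^ 2)
    (hF : Summable fun n => ∑ i, ∑ j, ‖F n i j‖ ^ 2) :
    Summable fun n => (G n)ᴴ * F n := by
  -- the Frobenius uniformity is the product one, but not reducibly so
  have : @CompleteSpace (Matrix ι ι 𝕜) PseudoMetricSpace.toUniformSpace :=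
    inferInstanceAs (CompleteSpace (ι → ι → 𝕜))
  simp only [← frobenius_norm_sq] at hG hF
  refine .of_norm_bounded ((hG.add hF).div_const 2) fun n => ?_
  calc ‖(G n)ᴴ * F n‖ ≤ ‖G n‖ * ‖F n‖ := by
        grw [frobenius_norm_mul, frobenius_norm_conjTranspose]
    _ ≤ (‖G n‖ ^ 2 + ‖F n‖ ^ 2) / 2 := by nlinarith [sq_nonneg (‖G n‖ - ‖F n‖)]

end Frobenius

section Wronskian

variable {l : ℕ} {Ds Vs F G : ℕ → Matrix (Fin l) (Fin l) ℂ} {z w : ℂ}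

def wronskian (Ds G F : ℕ → Matrix (Fin l) (Fin l) ℂ) (n : ℕ) : Matrix (Fin l) (Fin l) ℂ :=
  (G n)ᴴ * Ds n * F (n + 1) - (G (n + 1))ᴴ * Ds n * F n

lemma IsMatSol.mul_succ_succ (hF : IsMatSol Ds Vs z F) (n : ℕ) :
    Ds (n + 1) * F (n + 2) = z • F (n + 1) - Vs (n + 1) * F (n + 1) - Ds n * F n := by
  rw [← hF (n + 1) n.succ_pos, Nat.add_sub_cancel]
  abel

lemma IsMatSol.wronskian_succ (hD : ∀ n, (Ds n)ᴴ = Ds n) (hV : ∀ n, (Vs n)ᴴ = Vs n)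
    (hG : IsMatSol Ds Vs w G) (hF : IsMatSol Ds Vs z F) (n : ℕ) :
    wronskian Ds G F (n + 1) =
      wronskian Ds G F n + (z - conj w) • ((G (n + 1))ᴴ * F (n + 1)) := by
  have hGH : (G (n + 2))ᴴ * Ds (n + 1) =
      conj w • (G (n + 1))ᴴ - (G (n + 1))ᴴ * Vs (n + 1) - (G n)ᴴ * Ds n := by
    simpa [conjTranspose_mul, conjTranspose_sub, hD, hV] using
      congrArg conjTranspose (hG.mul_succ_succ n)
  have hW : wronskian Ds G F (n + 1) = (G (n + 1))ᴴ * (Ds (n + 1) * F (n + 2))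
      - ((G (n + 2))ᴴ * Ds (n + 1)) * F (n + 1) := by
    simp only [wronskian, Matrix.mul_assoc]
  rw [hW, hF.mul_succ_succ, hGH, wronskian]
  simp only [Matrix.mul_sub, Matrix.sub_mul, Matrix.mul_smul, Matrix.smul_mul, Matrix.mul_assoc]
  module

lemma IsMatSol.wronskian_eq_add_sum (hD : ∀ n, (Ds n)ᴴ = Ds n) (hV : ∀ n, (Vs n)ᴴ = Vs n)
    (hG : IsMatSol Ds Vs w G) (hF : IsMatSol Ds Vs z F) (n : ℕ) :
    wronskian Ds G F n =
      wronskian Ds G F 0 + (z - conj w) • ∑ k ∈ range n, (G (k + 1))ᴴ * F (k + 1) := by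
  induction n with
  | zero => simp
  | succ n ih => rw [hG.wronskian_succ hD hV hF, ih, sum_range_succ, smul_add, add_assoc]

lemma IsMatSol.wronskian_zero_add_smul_tsum_eq_zero (hD : ∀ n, (Ds n)ᴴ = Ds n)
    (hV : ∀ n, (Vs n)ᴴ = Vs n) {C : ℝ} (hDC : ∀ n i j, ‖Ds n i j‖ ≤ C)
    (hG : IsMatSol Ds Vs w G) (hF : IsMatSol Ds Vs z F)
    (hG2 : Summable fun n => ∑ i, ∑ j, ‖G n i j‖ ^ 2)
    (hF2 : Summable fun n => ∑ i, ∑ j, ‖F n i j‖ ^ 2) :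
    wronskian Ds G F 0 + (z - conj w) • ∑' k, (G (k + 1))ᴴ * F (k + 1) = 0 := by
  set f : ℕ → Matrix (Fin l) (Fin l) ℂ := fun k => (G (k + 1))ᴴ * F (k + 1)
  have hf : Summable f := Matrix.summable_conjTranspose_mul
    (hG2.comp_injective (add_left_injective 1)) (hF2.comp_injective (add_left_injective 1))
  have hlim : Tendsto (wronskian Ds G F) atTop
      (𝓝 (wronskian Ds G F 0 + (z - conj w) • ∑' k, f k)) := by
    refine .congr (fun n => (hG.wronskian_eq_add_sum hD hV hF n).symm) ?_
    exact (hf.hasSum.tendsto_sum_nat.const_smul (z - conj w)).const_add _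
  have hG0 := Matrix.tendsto_zero_of_summable_sum_norm_sq hG2
  have hF0 := Matrix.tendsto_zero_of_summable_sum_norm_sq hF2
  have hW0 : Tendsto (wronskian Ds G F) atTop (𝓝 0) := by
    have := (Matrix.tendsto_conjTranspose_mul_mul_zero hDC hG0
      (hF0.comp (tendsto_add_atTop_nat 1))).sub
      (Matrix.tendsto_conjTranspose_mul_mul_zero hDC (hG0.comp (tendsto_add_atTop_nat 1)) hF0)
    rwa [sub_zero] at this
  exact tendsto_nhds_unique hlim hW0

lemma IsMatSol.map_conj (hD : ∀ n, (Ds n).map conj = Ds n) (hV : ∀ n, (Vs n).map conj = Vs n)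
    (hF : IsMatSol Ds Vs z F) : IsMatSol Ds Vs (conj z) fun n => (F n).map conj := by
  intro n hn
  have hsmul : (z • F n).map conj = conj z • (F n).map conj := by ext; simp
  simpa [Matrix.map_add, Matrix.map_mul, hD, hV, hsmul] using
    congrArg (Matrix.map · conj) (hF n hn)

end Wronskian

theorem weyl_titchmarsh_symmetric_and_im_general
    {Ω : Type*}
    (T : Equiv.Perm Ω)
    {l : ℕ} (D V : Ω → Matrix (Fin l) (Fin l) ℝ)
    (hDsymm : ∀ ω, (D ω).IsSymm) (hDinv : ∀ ω, IsUnit (D ω))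
    (hDbdd : ∃ C : ℝ, ∀ ω i j, |D ω i j| ≤ C)
    (hVsymm : ∀ ω, (V ω).IsSymm)
    (ω : Ω) (z : ℂ)
    (F : ℕ → Matrix (Fin l) (Fin l) ℂ)
    (hF : IsJost (fun n => cx (D ((T ^ n) ω))) (fun n => cx (V ((T ^ n) ω))) z F) :
    ((-(F 1 * (cx (D ω))⁻¹))ᵀ = -(F 1 * (cx (D ω))⁻¹))
    ∧ (cx (D ω) * matIm (-(F 1 * (cx (D ω))⁻¹)) * cx (D ω)
        = (z.im : ℂ) • ∑' k : ℕ, (F (k + 1))ᴴ * F (k + 1)) := by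
  obtain ⟨C, hC⟩ := hDbdd
  obtain ⟨hsol, hF0, hF2⟩ := hF
  have hDH : ∀ n, (cx (D ((T ^ n) ω)))ᴴ = cx (D ((T ^ n) ω)) :=
    fun _ => cx_conjTranspose (hDsymm _)
  have hVH : ∀ n, (cx (V ((T ^ n) ω)))ᴴ = cx (V ((T ^ n) ω)) :=
    fun _ => cx_conjTranspose (hVsymm _)
  have hDC : ∀ n i j, ‖cx (D ((T ^ n) ω)) i j‖ ≤ C := fun n i j => by
    simpa only [norm_cx_apply] using hC _ i j
  have hconj := hsol.map_conj (fun _ => cx_map_conj) (fun _ => cx_map_conj)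
  have hsymm := hconj.wronskian_zero_add_smul_tsum_eq_zero hDH hVH hDC hsol
    (by simpa only [map_apply, Complex.norm_conj] using hF2) hF2
  have him := hsol.wronskian_zero_add_smul_tsum_eq_zero hDH hVH hDC hsol hF2 hF2
  simp only [wronskian, conjTranspose_map_starRingEnd, Complex.conj_conj, sub_self, zero_smul,
    add_zero, hF0, pow_zero, Equiv.Perm.coe_one, id, transpose_one, conjTranspose_one,
    Matrix.one_mul, Matrix.mul_one, zero_add, sub_eq_zero] at hsymm him
  have hE : IsUnit (cx (D ω)).det := isUnit_det_cx (hDinv ω)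
  constructor
  · rw [transpose_neg, transpose_mul_nonsing_inv_of_mul_eq (cx_transpose (hDsymm ω)) hE hsymm]
  · rw [mul_matIm_neg_mul_nonsing_inv_mul (cx_conjTranspose (hDsymm ω)) hE, ← neg_sub,
      add_eq_zero_iff_neg_eq.1 him, smul_smul, Complex.sub_conj]
    congr 1
    field_simp
    push_cast
    ring

/-- Properties of the Weyl–Titchmarsh function `M^φ(z,ω) := −F_1(z,ω) D(ω)⁻¹`:
(a) it is symmetric; (b) `D(ω) Im[M^φ] D(ω) = Im[z] ∑_{k≥1} F_k* F_k`. -/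
theorem weyl_titchmarsh_symmetric_and_im
    {Ω : Type*} [MeasurableSpace Ω] (ν : Measure Ω) [IsProbabilityMeasure ν]
    (T : Equiv.Perm Ω) (hT : Ergodic (⇑T) ν)
    {l : ℕ} (D V : Ω → Matrix (Fin l) (Fin l) ℝ)
    (hDsymm : ∀ ω, (D ω).IsSymm) (hDinv : ∀ ω, IsUnit (D ω))
    (hDbdd : ∃ C : ℝ, ∀ ω i j, |D ω i j| ≤ C)
    (hVsymm : ∀ ω, (V ω).IsSymm)
    (ω : Ω) (z : ℂ) (hz : z.im ≠ 0)
    (F : ℕ → Matrix (Fin l) (Fin l) ℂ)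
    (hF : IsJost (fun n => cx (D ((T ^ n) ω))) (fun n => cx (V ((T ^ n) ω))) z F) :
    ((-(F 1 * (cx (D ω))⁻¹))ᵀ = -(F 1 * (cx (D ω))⁻¹))
    ∧ (cx (D ω) * matIm (-(F 1 * (cx (D ω))⁻¹)) * cx (D ω)
        = (z.im : ℂ) • ∑' k : ℕ, (F (k + 1))ᴴ * F (k + 1)) :=
  weyl_titchmarsh_symmetric_and_im_general T D V hDsymm hDinv hDbdd hVsymm ω z F hF
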